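/- arXiv:2205.07717 — 2 statements merged into one kernel-verified Lean document; each statement's English description precedes it below -/
import Mathlib

section
/- Let k ≥ 1 be an integer and φ : ℂ → ℝ a smooth nonnegative function. For every ψ ∈ C_c^∞(ℂ), one has the pointwise identity ∂^k ∂̄^k(∂̄_φ^{k*}∂_φ^{k*} ψ) − ∂̄_φ^{k*}∂_φ^{k*}(∂^k ∂̄^k ψ) = Σ_{i=0}^{k} Σ_{j=0}^{k} Σ_{(l,m) ∈ {0,…,k}², (l,m) ≠ (0,0)} C(k,i) C(k,j) C(k,l) C(k,m) · (∂^{k−m} ∂̄^{k−l} ∂^{k−j} ∂̄^{k−i} ψ) · ∂^m ∂̄^l (e^{φ} ∂^j ∂̄^i e^{−φ}), where C(n,r) denotes the binomial coefficient. -/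
open MeasureTheory Complex Finset

/-- Wirtinger derivative ∂ = (1/2)(∂/∂x − i ∂/∂y). -/
noncomputable def wD (f : ℂ → ℂ) : ℂ → ℂ :=
  fun z => (1 / 2 : ℂ) * (fderiv ℝ f z 1 - Complex.I * fderiv ℝ f z Complex.I)

/-- Conjugate Wirtinger derivative ∂̄ = (1/2)(∂/∂x + i ∂/∂y). -/
noncomputable def wDbar (f : ℂ → ℂ) : ℂ → ℂ :=
  fun z => (1 / 2 : ℂ) * (fderiv ℝ f z 1 + Complex.I * fderiv ℝ f z Complex.I)

/-- The operator ∂^k ∂̄^k. -/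
noncomputable def Dk (k : ℕ) (f : ℂ → ℂ) : ℂ → ℂ := wD^[k] (wDbar^[k] f)

/-- Membership in the weighted space L²(ℂ, e^{−φ}): f is (a.e. strongly) measurable,
locally square-integrable, and ∫ |f|² e^{−φ} < ∞. -/
def MemL2w (φ : ℂ → ℝ) (f : ℂ → ℂ) : Prop :=
  AEStronglyMeasurable f volume ∧
  LocallyIntegrable (fun z => ‖f z‖ ^ 2) volume ∧
  Integrable (fun z => ‖f z‖ ^ 2 * Real.exp (-(φ z))) volume

/-- Weighted inner product ⟨f, g⟩_φ = ∫ f̄ g e^{−φ} dσ. -/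
noncomputable def innerW (φ : ℂ → ℝ) (f g : ℂ → ℂ) : ℂ :=
  ∫ z, (starRingEnd ℂ) (f z) * g z * (Real.exp (-(φ z)) : ℂ)

/-- Weighted squared norm ‖f‖_φ² = ∫ |f|² e^{−φ} dσ. -/
noncomputable def normSqW (φ : ℂ → ℝ) (f : ℂ → ℂ) : ℝ :=
  ∫ z, ‖f z‖ ^ 2 * Real.exp (-(φ z))

/-- u is a weak solution of ∂^k ∂̄^k u + c u = f. -/
def IsWeakSol (k : ℕ) (c : ℂ) (u f : ℂ → ℂ) : Prop :=
  ∀ ψ : ℂ → ℂ, ContDiff ℝ (⊤ : ℕ∞) ψ → HasCompactSupport ψ →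
    (∫ z, u z * Dk k ψ z) + c * (∫ z, u z * ψ z) = ∫ z, f z * ψ z

/-- ∂̄_φ^{k*}∂_φ^{k*} ψ = e^{φ} ∂^k ∂̄^k (ψ e^{−φ}). -/
noncomputable def adjOp (k : ℕ) (φ : ℂ → ℝ) (ψ : ℂ → ℂ) : ℂ → ℂ :=
  fun z => (Real.exp (φ z) : ℂ) * Dk k (fun w => ψ w * (Real.exp (-(φ w)) : ℂ)) z

/-- The formal adjoint (∂^k ∂̄^k + c)_φ^* ψ = ∂̄_φ^{k*}∂_φ^{k*} ψ + c̄ ψ. -/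
noncomputable def adjOpC (k : ℕ) (c : ℂ) (φ : ℂ → ℝ) (ψ : ℂ → ℂ) : ℂ → ℂ :=
  fun z => adjOp k φ ψ z + (starRingEnd ℂ) c * ψ z

/-! ### Auxiliary development: calculus of the generic operator `wG ε`. -/

/-- Generic first-order operator capturing both `wD` (ε = −i) and `wDbar` (ε = i). -/
noncomputable def wG (ε : ℂ) (f : ℂ → ℂ) : ℂ → ℂ :=
  fun z => (1 / 2 : ℂ) * (fderiv ℝ f z 1 + ε * fderiv ℝ f z Complex.I)

lemma wD_eq_wG : wD = wG (-Complex.I) := by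
  funext f z; simp [wD, wG, neg_mul, sub_eq_add_neg]

lemma wDbar_eq_wG : wDbar = wG Complex.I := rfl

lemma ContDiff.wGsm {ε : ℂ} {f : ℂ → ℂ} (hf : ContDiff ℝ (⊤ : ℕ∞) f) : ContDiff ℝ (⊤ : ℕ∞) (wG ε f) := by
  have h := hf.fderiv_right (m := (⊤ : ℕ∞)) (by simp)
  exact contDiff_const.mul ((h.clm_apply contDiff_const).add
    (contDiff_const.mul (h.clm_apply contDiff_const)))

lemma wG_iter_smooth (ε : ℂ) (n : ℕ) {f : ℂ → ℂ} (hf : ContDiff ℝ (⊤ : ℕ∞) f) :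
    ContDiff ℝ (⊤ : ℕ∞) ((wG ε)^[n] f) := by
  induction n with
  | zero => simpa using hf
  | succ n ih => rw [Function.iterate_succ_apply']; exact ih.wGsm

lemma fderiv_swap {f : ℂ → ℂ} (hf : ContDiff ℝ (⊤ : ℕ∞) f) (x v w : ℂ) :
    fderiv ℝ (fun z => fderiv ℝ f z v) x w = fderiv ℝ (fun z => fderiv ℝ f z w) x v := by
  have hd : DifferentiableAt ℝ (fderiv ℝ f) x :=
    ((hf.fderiv_right (m := (⊤ : ℕ∞)) (by simp)).differentiable (by simp)) x
  have h : ∀ u : ℂ, fderiv ℝ (fun z => fderiv ℝ f z u) x = (fderiv ℝ (fderiv ℝ f) x).flip u := by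
    intro u
    rw [fderiv_clm_apply hd (differentiableAt_const u)]
    simp
  rw [h v, h w]
  exact (hf.contDiffAt.isSymmSndFDerivAt (by rw [minSmoothness_of_isRCLikeNormedField]; exact WithTop.coe_le_coe.mpr le_top)).eq w v

lemma fderiv_comb {a b : ℂ → ℂ} {z : ℂ} (ha : DifferentiableAt ℝ a z)
    (hb : DifferentiableAt ℝ b z) (c ε w : ℂ) :
    fderiv ℝ (fun y => c * (a y + ε * b y)) z w
      = c * (fderiv ℝ a z w + ε * fderiv ℝ b z w) := by
  rw [fderiv_const_mul (show DifferentiableAt ℝ (fun y => a y + ε * b y) z from ha.add (hb.const_mul ε)), fderiv_fun_add ha (hb.const_mul ε),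
      fderiv_const_mul hb]
  simp only [ContinuousLinearMap.add_apply, ContinuousLinearMap.coe_smul', Pi.smul_apply,
    smul_eq_mul]

lemma fderiv_wG {f : ℂ → ℂ} (ε : ℂ) (hf : ContDiff ℝ (⊤ : ℕ∞) f) (z w : ℂ) :
    fderiv ℝ (wG ε f) z w
      = (1 / 2 : ℂ) * (fderiv ℝ (fun y => fderiv ℝ f y 1) z w
          + ε * fderiv ℝ (fun y => fderiv ℝ f y Complex.I) z w) := by
  have h1 : Differentiable ℝ (fun y => fderiv ℝ f y (1 : ℂ)) :=
    ((hf.fderiv_right (m := (⊤ : ℕ∞)) (by simp)).clm_apply contDiff_const).differentiable (by simp)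
  have hI : Differentiable ℝ (fun y => fderiv ℝ f y Complex.I) :=
    ((hf.fderiv_right (m := (⊤ : ℕ∞)) (by simp)).clm_apply contDiff_const).differentiable (by simp)
  exact fderiv_comb (h1 z) (hI z) _ _ _

lemma wG_comm {f : ℂ → ℂ} (ε ε' : ℂ) (hf : ContDiff ℝ (⊤ : ℕ∞) f) :
    wG ε (wG ε' f) = wG ε' (wG ε f) := by
  funext z
  show (1 / 2 : ℂ) * (fderiv ℝ (wG ε' f) z 1 + ε * fderiv ℝ (wG ε' f) z Complex.I)
      = (1 / 2 : ℂ) * (fderiv ℝ (wG ε f) z 1 + ε' * fderiv ℝ (wG ε f) z Complex.I)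
  rw [fderiv_wG ε' hf z 1, fderiv_wG ε' hf z Complex.I, fderiv_wG ε hf z 1,
      fderiv_wG ε hf z Complex.I,
      show fderiv ℝ (fun y => fderiv ℝ f y Complex.I) z 1
          = fderiv ℝ (fun y => fderiv ℝ f y 1) z Complex.I from fderiv_swap hf z Complex.I 1]
  ring

lemma wG_const_mul (ε c : ℂ) {f : ℂ → ℂ} (hf : Differentiable ℝ f) :
    wG ε (fun z => c * f z) = fun z => c * wG ε f z := by
  funext z
  simp only [wG]
  rw [fderiv_const_mul (hf z)]
  simp only [ContinuousLinearMap.coe_smul', Pi.smul_apply, smul_eq_mul]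
  ring

lemma wG_mul (ε : ℂ) {f g : ℂ → ℂ} (hf : Differentiable ℝ f) (hg : Differentiable ℝ g) :
    wG ε (fun z => f z * g z) = fun z => wG ε f z * g z + f z * wG ε g z := by
  funext z
  simp only [wG]
  rw [fderiv_fun_mul (hf z) (hg z)]
  simp only [ContinuousLinearMap.add_apply, ContinuousLinearMap.coe_smul', Pi.smul_apply,
    smul_eq_mul]
  ring

lemma wG_sum {ι : Type*} (ε : ℂ) (s : Finset ι) (h : ι → ℂ → ℂ)
    (hh : ∀ i ∈ s, Differentiable ℝ (h i)) :
    wG ε (fun z => ∑ i ∈ s, h i z) = fun z => ∑ i ∈ s, wG ε (h i) z := by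
  funext z
  simp only [wG]
  rw [fderiv_fun_sum (fun i hi => (hh i hi z))]
  simp only [ContinuousLinearMap.coe_sum', Finset.sum_apply]
  rw [Finset.mul_sum, ← Finset.sum_add_distrib, Finset.mul_sum]

lemma wG_iter_const_mul (ε c : ℂ) (n : ℕ) {f : ℂ → ℂ} (hf : ContDiff ℝ (⊤ : ℕ∞) f) :
    (wG ε)^[n] (fun z => c * f z) = fun z => c * (wG ε)^[n] f z := by
  induction n with
  | zero => rfl
  | succ n ih =>
    simp only [Function.iterate_succ_apply']
    rw [ih]
    exact wG_const_mul ε c ((wG_iter_smooth ε n hf).differentiable (by simp))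

lemma wG_iter_sum {ι : Type*} (ε : ℂ) (n : ℕ) (s : Finset ι) (h : ι → ℂ → ℂ)
    (hh : ∀ i ∈ s, ContDiff ℝ (⊤ : ℕ∞) (h i)) :
    (wG ε)^[n] (fun z => ∑ i ∈ s, h i z) = fun z => ∑ i ∈ s, (wG ε)^[n] (h i) z := by
  induction n with
  | zero => rfl
  | succ n ih =>
    simp only [Function.iterate_succ_apply']
    rw [ih]
    exact wG_sum ε s _ (fun i hi => (wG_iter_smooth ε n (hh i hi)).differentiable (by simp))

lemma wG_comm_iter (ε ε' : ℂ) (n : ℕ) {f : ℂ → ℂ} (hf : ContDiff ℝ (⊤ : ℕ∞) f) :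
    wG ε ((wG ε')^[n] f) = (wG ε')^[n] (wG ε f) := by
  induction n with
  | zero => rfl
  | succ n ih =>
    simp only [Function.iterate_succ_apply']
    rw [wG_comm ε ε' (wG_iter_smooth ε' n hf), ih]

lemma wG_iter_comm (ε ε' : ℂ) (m n : ℕ) {f : ℂ → ℂ} (hf : ContDiff ℝ (⊤ : ℕ∞) f) :
    (wG ε)^[m] ((wG ε')^[n] f) = (wG ε')^[n] ((wG ε)^[m] f) := by
  induction m with
  | zero => rfl
  | succ m ih =>
    simp only [Function.iterate_succ_apply']
    rw [ih, wG_comm_iter ε ε' n (wG_iter_smooth ε m hf)]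

lemma binom_rec (n : ℕ) (a : ℕ → ℂ) :
    (∑ i ∈ Finset.range (n + 1), (n.choose i : ℂ) * a i)
      + (∑ i ∈ Finset.range (n + 1), (n.choose i : ℂ) * a (i + 1))
    = ∑ i ∈ Finset.range (n + 2), ((n + 1).choose i : ℂ) * a i := by
  rw [Finset.sum_range_succ' (fun i => ((n + 1).choose i : ℂ) * a i) (n + 1)]
  simp only [Nat.choose_succ_succ, Nat.cast_add, add_mul, Nat.choose_zero_right, Nat.cast_one,
    one_mul]
  rw [Finset.sum_add_distrib]
  rw [Finset.sum_range_succ' (fun i => (n.choose i : ℂ) * a i) n]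
  rw [Finset.sum_range_succ (fun i => (n.choose (i + 1) : ℂ) * a (i + 1)) n]
  simp only [Nat.choose_succ_self, Nat.cast_zero, zero_mul, add_zero, Nat.choose_zero_right,
    Nat.cast_one, one_mul]
  ring

lemma wG_iter_mul (ε : ℂ) (n : ℕ) {f g : ℂ → ℂ} (hf : ContDiff ℝ (⊤ : ℕ∞) f) (hg : ContDiff ℝ (⊤ : ℕ∞) g) :
    (wG ε)^[n] (fun z => f z * g z)
      = fun z => ∑ i ∈ Finset.range (n + 1),
          (n.choose i : ℂ) * ((wG ε)^[n - i] f z * (wG ε)^[i] g z) := by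
  induction n with
  | zero => funext z; simp
  | succ n ih =>
    have hsm : ∀ i : ℕ, ContDiff ℝ (⊤ : ℕ∞) fun z => (wG ε)^[n - i] f z * (wG ε)^[i] g z :=
      fun i => (wG_iter_smooth ε _ hf).mul (wG_iter_smooth ε _ hg)
    simp only [Function.iterate_succ_apply']
    rw [ih, wG_sum ε (Finset.range (n + 1)) _
        (fun i _ => (contDiff_const.mul (hsm i)).differentiable (by simp))]
    funext z
    have step : ∀ i ∈ Finset.range (n + 1),
        wG ε (fun z => (n.choose i : ℂ) * ((wG ε)^[n - i] f z * (wG ε)^[i] g z)) z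
          = (n.choose i : ℂ) * ((wG ε)^[n + 1 - i] f z * (wG ε)^[i] g z)
            + (n.choose i : ℂ) * ((wG ε)^[n - i] f z * (wG ε)^[i + 1] g z) := by
      intro i hi
      have hi' : i ≤ n := Nat.lt_succ_iff.mp (Finset.mem_range.mp hi)
      have hA := wG_iter_smooth ε (n - i) hf
      have hB := wG_iter_smooth ε i hg
      simp only [wG_const_mul ε ((n.choose i : ℂ)) ((hsm i).differentiable (by simp)),
        wG_mul ε (hA.differentiable (by simp)) (hB.differentiable (by simp))]
      rw [← Function.iterate_succ_apply' (wG ε) (n - i) f,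
          ← Function.iterate_succ_apply' (wG ε) i g]
      simp only [Nat.succ_eq_add_one]
      rw [(by omega : n - i + 1 = n + 1 - i)]
      ring
    rw [Finset.sum_congr rfl step, Finset.sum_add_distrib]
    have key := binom_rec n (fun i => (wG ε)^[n + 1 - i] f z * (wG ε)^[i] g z)
    simp only [Nat.succ_sub_succ_eq_sub] at key
    exact key

lemma Dk_smooth (k : ℕ) {f : ℂ → ℂ} (hf : ContDiff ℝ (⊤ : ℕ∞) f) : ContDiff ℝ (⊤ : ℕ∞) (Dk k f) := by
  simp only [Dk, wD_eq_wG, wDbar_eq_wG]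
  exact wG_iter_smooth _ _ (wG_iter_smooth _ _ hf)

lemma Dk_mul_expand (k : ℕ) {F G : ℂ → ℂ} (hF : ContDiff ℝ (⊤ : ℕ∞) F) (hG : ContDiff ℝ (⊤ : ℕ∞) G) :
    Dk k (fun z => F z * G z)
      = fun z => ∑ l ∈ Finset.range (k + 1), ∑ m ∈ Finset.range (k + 1),
          (k.choose l : ℂ) * (k.choose m : ℂ) *
            ((wG (-Complex.I))^[k - m] ((wG Complex.I)^[k - l] F) z
              * (wG (-Complex.I))^[m] ((wG Complex.I)^[l] G) z) := by
  simp only [Dk, wD_eq_wG, wDbar_eq_wG]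
  rw [wG_iter_mul Complex.I k hF hG]
  rw [wG_iter_sum (-Complex.I) k (Finset.range (k + 1)) _
      (fun l _ => contDiff_const.mul ((wG_iter_smooth _ _ hF).mul (wG_iter_smooth _ _ hG)))]
  funext z
  refine Finset.sum_congr rfl fun l hl => ?_
  have hA := wG_iter_smooth Complex.I (k - l) hF
  have hB := wG_iter_smooth Complex.I l hG
  simp only [wG_iter_const_mul (-Complex.I) ((k.choose l : ℂ)) k (hA.mul hB),
    wG_iter_mul (-Complex.I) k hA hB]
  rw [Finset.mul_sum]
  exact Finset.sum_congr rfl fun m hm => by ring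

lemma adj_expand (k : ℕ) {φ : ℂ → ℝ} (hφ : ContDiff ℝ (⊤ : ℕ∞) φ) {χ : ℂ → ℂ} (hχ : ContDiff ℝ (⊤ : ℕ∞) χ) :
    adjOp k φ χ
      = fun z => ∑ i ∈ Finset.range (k + 1), ∑ j ∈ Finset.range (k + 1),
          (k.choose i : ℂ) * (k.choose j : ℂ) *
            ((wG (-Complex.I))^[k - j] ((wG Complex.I)^[k - i] χ) z *
              ((Real.exp (φ z) : ℂ) *
                (wG (-Complex.I))^[j]
                  ((wG Complex.I)^[i] (fun v => (Real.exp (-(φ v)) : ℂ))) z)) := by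
  have hE : ContDiff ℝ (⊤ : ℕ∞) (fun v => (Real.exp (-(φ v)) : ℂ)) :=
    Complex.ofRealCLM.contDiff.comp (Real.contDiff_exp.comp hφ.neg)
  funext z
  simp only [adjOp, Dk_mul_expand k hχ hE]
  rw [Finset.mul_sum]
  refine Finset.sum_congr rfl fun i hi => ?_
  rw [Finset.mul_sum]
  exact Finset.sum_congr rfl fun j hj => by ring

lemma iter_shuffle (a b k : ℕ) {ψ : ℂ → ℂ} (hψ : ContDiff ℝ (⊤ : ℕ∞) ψ) :
    (wG (-Complex.I))^[a] ((wG Complex.I)^[b] ((wG (-Complex.I))^[k] ((wG Complex.I)^[k] ψ)))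
      = (wG (-Complex.I))^[k] ((wG Complex.I)^[k] ((wG (-Complex.I))^[a] ((wG Complex.I)^[b] ψ))) := by
  rw [wG_iter_comm Complex.I (-Complex.I) b k (wG_iter_smooth _ _ hψ)]
  rw [← Function.iterate_add_apply (wG (-Complex.I)) a k,
      ← Function.iterate_add_apply (wG Complex.I) b k,
      add_comm a k, add_comm b k,
      Function.iterate_add_apply (wG (-Complex.I)) k a,
      Function.iterate_add_apply (wG Complex.I) k b]
  rw [wG_iter_comm (-Complex.I) Complex.I a k (wG_iter_smooth _ _ hψ)]


lemma Dk_const_mul (k : ℕ) (c : ℂ) {f : ℂ → ℂ} (hf : ContDiff ℝ (⊤ : ℕ∞) f) :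
    Dk k (fun z => c * f z) = fun z => c * Dk k f z := by
  simp only [Dk, wD_eq_wG, wDbar_eq_wG]
  rw [wG_iter_const_mul Complex.I c k hf,
      wG_iter_const_mul (-Complex.I) c k (wG_iter_smooth _ _ hf)]

lemma Dk_double_sum (k : ℕ) {s t : Finset ℕ} (h : ℕ → ℕ → ℂ → ℂ)
    (hh : ∀ i ∈ s, ∀ j ∈ t, ContDiff ℝ (⊤ : ℕ∞) (h i j)) :
    Dk k (fun z => ∑ i ∈ s, ∑ j ∈ t, h i j z)
      = fun z => ∑ i ∈ s, ∑ j ∈ t, Dk k (h i j) z := by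
  simp only [Dk, wD_eq_wG, wDbar_eq_wG]
  rw [wG_iter_sum Complex.I k s (fun i => fun z => ∑ j ∈ t, h i j z)
      (fun i hi => ContDiff.sum fun j hj => hh i hi j hj)]
  rw [wG_iter_sum (-Complex.I) k s _
      (fun i hi => wG_iter_smooth _ _ (ContDiff.sum fun j hj => hh i hi j hj))]
  funext z
  refine Finset.sum_congr rfl fun i hi => ?_
  simp only [wG_iter_sum Complex.I k t (h i) (fun j hj => hh i hi j hj),
    wG_iter_sum (-Complex.I) k t (fun j => (wG Complex.I)^[k] (h i j))
      (fun j hj => wG_iter_smooth _ _ (hh i hi j hj))]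

lemma product_split (k : ℕ) (f : ℕ × ℕ → ℂ) :
    (∑ l ∈ Finset.range (k + 1), ∑ m ∈ Finset.range (k + 1), f (l, m))
      = (∑ p ∈ (Finset.range (k + 1) ×ˢ Finset.range (k + 1)).filter
            (fun p => p ≠ (0, 0)), f p)
        + f (0, 0) := by
  rw [← Finset.sum_product, Finset.filter_ne']
  exact (Finset.sum_erase_add _ _ (Finset.mem_product.mpr
    ⟨Finset.mem_range.mpr k.succ_pos, Finset.mem_range.mpr k.succ_pos⟩)).symm

/-- the pointwise commutator formula
∂^k ∂̄^k(∂̄_φ^{k*}∂_φ^{k*} ψ) − ∂̄_φ^{k*}∂_φ^{k*}(∂^k ∂̄^k ψ)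
  = Σ_{i,j=0}^{k} Σ_{(l,m)≠(0,0)} C(k,i)C(k,j)C(k,l)C(k,m)
      (∂^{k−m}∂̄^{k−l}∂^{k−j}∂̄^{k−i} ψ) · ∂^m ∂̄^l(e^{φ} ∂^j ∂̄^i e^{−φ}). -/
theorem stmt4 (k : ℕ) (hk : 1 ≤ k)
    (φ : ℂ → ℝ) (hφ : ContDiff ℝ (⊤ : ℕ∞) φ) (hφ0 : ∀ z, 0 ≤ φ z)
    (ψ : ℂ → ℂ) (hψ : ContDiff ℝ (⊤ : ℕ∞) ψ) (hψc : HasCompactSupport ψ) :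
    ∀ z : ℂ, Dk k (adjOp k φ ψ) z - adjOp k φ (Dk k ψ) z =
      ∑ i ∈ Finset.range (k + 1), ∑ j ∈ Finset.range (k + 1),
        ∑ p ∈ (Finset.range (k + 1) ×ˢ Finset.range (k + 1)).filter
            (fun p => p ≠ (0, 0)),
          (k.choose i : ℂ) * (k.choose j : ℂ) * (k.choose p.1 : ℂ) *
              (k.choose p.2 : ℂ) *
            (wD^[k - p.2] (wDbar^[k - p.1] (wD^[k - j] (wDbar^[k - i] ψ))) z) *
            (wD^[p.2] (wDbar^[p.1] (fun w => (Real.exp (φ w) : ℂ) *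
              (wD^[j] (wDbar^[i] (fun v => (Real.exp (-(φ v)) : ℂ))) w))) z) := by
  have hE : ContDiff ℝ (⊤ : ℕ∞) (fun v => (Real.exp (-(φ v)) : ℂ)) :=
    Complex.ofRealCLM.contDiff.comp (Real.contDiff_exp.comp hφ.neg)
  have hEp : ContDiff ℝ (⊤ : ℕ∞) (fun w => (Real.exp (φ w) : ℂ)) :=
    Complex.ofRealCLM.contDiff.comp (Real.contDiff_exp.comp hφ)
  have hDkψ : ContDiff ℝ (⊤ : ℕ∞) (Dk k ψ) := Dk_smooth k hψ
  have hF : ∀ i j : ℕ, ContDiff ℝ (⊤ : ℕ∞) ((wG (-Complex.I))^[k - j] ((wG Complex.I)^[k - i] ψ)) :=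
    fun i j => wG_iter_smooth _ _ (wG_iter_smooth _ _ hψ)
  have hG : ∀ i j : ℕ, ContDiff ℝ (⊤ : ℕ∞) (fun w => (Real.exp (φ w) : ℂ) *
      (wG (-Complex.I))^[j] ((wG Complex.I)^[i] (fun v => (Real.exp (-(φ v)) : ℂ))) w) :=
    fun i j => hEp.mul (wG_iter_smooth _ _ (wG_iter_smooth _ _ hE))
  have shuffle : ∀ a b : ℕ,
      (wG (-Complex.I))^[a] ((wG Complex.I)^[b] (Dk k ψ))
        = Dk k ((wG (-Complex.I))^[a] ((wG Complex.I)^[b] ψ)) := by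
    intro a b
    simp only [Dk, wD_eq_wG, wDbar_eq_wG]
    exact iter_shuffle a b k hψ
  intro z
  simp only [wD_eq_wG, wDbar_eq_wG]
  simp only [adj_expand k hφ hψ, adj_expand k hφ hDkψ]
  simp only [Dk_double_sum k
      (fun i j => fun w => (k.choose i : ℂ) * (k.choose j : ℂ) *
        ((wG (-Complex.I))^[k - j] ((wG Complex.I)^[k - i] ψ) w *
          ((Real.exp (φ w) : ℂ) *
            (wG (-Complex.I))^[j]
              ((wG Complex.I)^[i] (fun v => (Real.exp (-(φ v)) : ℂ))) w)))
      (fun i _ j _ => contDiff_const.mul ((hF i j).mul (hG i j)))]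
  rw [← Finset.sum_sub_distrib]
  refine Finset.sum_congr rfl fun i hi => ?_
  rw [← Finset.sum_sub_distrib]
  refine Finset.sum_congr rfl fun j hj => ?_
  simp only [Dk_const_mul k ((k.choose i : ℂ) * (k.choose j : ℂ)) ((hF i j).mul (hG i j)),
    Dk_mul_expand k (hF i j) (hG i j), shuffle]
  rw [product_split k (fun p => (k.choose p.1 : ℂ) * (k.choose p.2 : ℂ) *
      ((wG (-Complex.I))^[k - p.2] ((wG Complex.I)^[k - p.1]
          ((wG (-Complex.I))^[k - j] ((wG Complex.I)^[k - i] ψ))) z *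
        (wG (-Complex.I))^[p.2] ((wG Complex.I)^[p.1] (fun w => (Real.exp (φ w) : ℂ) *
          (wG (-Complex.I))^[j]
            ((wG Complex.I)^[i] (fun v => (Real.exp (-(φ v)) : ℂ))) w)) z))]
  simp only [Nat.choose_zero_right, Nat.cast_one, one_mul, Nat.sub_zero,
    Function.iterate_zero_apply, Dk, wD_eq_wG, wDbar_eq_wG]
  rw [mul_add, add_sub_cancel_right, Finset.mul_sum]
  exact Finset.sum_congr rfl fun p _ => by ring
end

section
/- For all integers i, j ≥ 0, one has the pointwise identity ∂^j ∂̄^i e^{−|z|²} = (Σ_{n=max(0, j−i)}^{j} (−1)^{i+n} C(j,n) (i!/(i−j+n)!) z^{i−j+n} z̄^{n}) e^{−|z|²} for all z ∈ ℂ, where C(j,n) denotes the binomial coefficient. In particular ∂̄^i e^{−|z|²} = (−1)^i z^i e^{−|z|²}. -/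
open MeasureTheory Complex Finset

noncomputable def Ew : ℂ → ℂ := fun w => Complex.exp (-(w * (starRingEnd ℂ) w))

lemma conj_hasFDerivAt (z : ℂ) :
    HasFDerivAt (fun w : ℂ => (starRingEnd ℂ) w) (Complex.conjCLE : ℂ →L[ℝ] ℂ) z :=
  (Complex.conjCLE : ℂ →L[ℝ] ℂ).hasFDerivAt

lemma Ew_hasFDerivAt (z : ℂ) :
    HasFDerivAt Ew (Ew z • (-(z • (Complex.conjCLE : ℂ →L[ℝ] ℂ) +
      ((starRingEnd ℂ) z) • (ContinuousLinearMap.id ℝ ℂ)))) z := by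
  have h1 : HasFDerivAt (fun w : ℂ => w * (starRingEnd ℂ) w)
      (z • (Complex.conjCLE : ℂ →L[ℝ] ℂ) + ((starRingEnd ℂ) z) • (ContinuousLinearMap.id ℝ ℂ)) z := by
    simpa using (hasFDerivAt_id z).fun_mul (conj_hasFDerivAt z)
  exact h1.neg.cexp

lemma fderiv_Ew (z v : ℂ) :
    fderiv ℝ Ew z v = Ew z * (-(z * (starRingEnd ℂ) v + (starRingEnd ℂ) z * v)) := by
  rw [(Ew_hasFDerivAt z).fderiv]
  simp [Complex.conjCLE_apply, smul_eq_mul]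
  ring

lemma Ew_diff : Differentiable ℝ Ew := fun z => (Ew_hasFDerivAt z).differentiableAt

lemma wD_Ew (z : ℂ) : wD Ew z = -(starRingEnd ℂ) z * Ew z := by
  simp only [wD, fderiv_Ew, map_one, Complex.conj_I]
  have hI := Complex.I_mul_I
  linear_combination (-(Ew z * z - Ew z * (starRingEnd ℂ) z)/2) * hI

lemma wDbar_Ew (z : ℂ) : wDbar Ew z = -z * Ew z := by
  simp only [wDbar, fderiv_Ew, map_one, Complex.conj_I]
  have hI := Complex.I_mul_I
  linear_combination (Ew z * z / 2 - Ew z * (starRingEnd ℂ) z / 2) * hI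

lemma wD_mul' {f h : ℂ → ℂ} {z : ℂ} (hf : DifferentiableAt ℝ f z) (hh : DifferentiableAt ℝ h z) :
    wD (fun w => f w * h w) z = wD f z * h z + f z * wD h z := by
  simp only [wD, fderiv_fun_mul hf hh, ContinuousLinearMap.add_apply,
    ContinuousLinearMap.smul_apply, smul_eq_mul]
  ring

lemma wDbar_mul' {f h : ℂ → ℂ} {z : ℂ} (hf : DifferentiableAt ℝ f z) (hh : DifferentiableAt ℝ h z) :
    wDbar (fun w => f w * h w) z = wDbar f z * h z + f z * wDbar h z := by
  simp only [wDbar, fderiv_fun_mul hf hh, ContinuousLinearMap.add_apply,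
    ContinuousLinearMap.smul_apply, smul_eq_mul]
  ring

lemma fderiv_pow'' (a : ℕ) (z v : ℂ) :
    fderiv ℝ (fun w : ℂ => w ^ a) z v = v * ((a : ℂ) * z ^ (a - 1)) := by
  rw [((hasDerivAt_pow a z).hasFDerivAt.restrictScalars ℝ).fderiv]
  simp [smul_eq_mul]

lemma fderiv_conj_pow (b : ℕ) (z v : ℂ) :
    fderiv ℝ (fun w : ℂ => ((starRingEnd ℂ) w) ^ b) z v =
      (starRingEnd ℂ) v * ((b : ℂ) * ((starRingEnd ℂ) z) ^ (b - 1)) := by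
  have h := ((hasDerivAt_pow b ((starRingEnd ℂ) z)).hasFDerivAt.restrictScalars ℝ).comp z
    (conj_hasFDerivAt z)
  have h' : HasFDerivAt (fun w : ℂ => ((starRingEnd ℂ) w) ^ b) _ z := h
  rw [h'.fderiv]
  simp [smul_eq_mul, Complex.conjCLE_apply]

lemma wD_pow (a : ℕ) (z : ℂ) : wD (fun w : ℂ => w ^ a) z = (a : ℂ) * z ^ (a - 1) := by
  simp only [wD, fderiv_pow'']
  have hI := Complex.I_mul_I
  linear_combination (-(a : ℂ) * z ^ (a-1) / 2) * hI

lemma wDbar_pow (a : ℕ) (z : ℂ) : wDbar (fun w : ℂ => w ^ a) z = 0 := by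
  simp only [wDbar, fderiv_pow'']
  have hI := Complex.I_mul_I
  linear_combination ((a : ℂ) * z ^ (a-1) / 2) * hI

lemma wD_conj_pow (b : ℕ) (z : ℂ) : wD (fun w : ℂ => ((starRingEnd ℂ) w) ^ b) z = 0 := by
  simp only [wD, fderiv_conj_pow, map_one, Complex.conj_I]
  have hI := Complex.I_mul_I
  linear_combination ((b : ℂ) * ((starRingEnd ℂ) z) ^ (b-1) / 2) * hI

lemma wDbar_conj_pow (b : ℕ) (z : ℂ) :
    wDbar (fun w : ℂ => ((starRingEnd ℂ) w) ^ b) z = (b : ℂ) * ((starRingEnd ℂ) z) ^ (b - 1) := by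
  simp only [wDbar, fderiv_conj_pow, map_one, Complex.conj_I]
  have hI := Complex.I_mul_I
  linear_combination (-(b : ℂ) * ((starRingEnd ℂ) z) ^ (b-1) / 2) * hI

lemma diff_pow (a : ℕ) : Differentiable ℝ (fun w : ℂ => w ^ a) :=
  fun z => ((hasDerivAt_pow a z).hasFDerivAt.restrictScalars ℝ).differentiableAt

lemma diff_conj_pow (b : ℕ) : Differentiable ℝ (fun w : ℂ => ((starRingEnd ℂ) w) ^ b) :=
  fun z => (((hasDerivAt_pow b ((starRingEnd ℂ) z)).hasFDerivAt.restrictScalars ℝ).comp z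
    (conj_hasFDerivAt z)).differentiableAt

lemma diff_m (a b : ℕ) : Differentiable ℝ (fun w : ℂ => w ^ a * ((starRingEnd ℂ) w) ^ b * Ew w) :=
  ((diff_pow a).mul (diff_conj_pow b)).mul Ew_diff

lemma wD_sum {s : Finset ℕ} {f : ℕ → ℂ → ℂ} {z : ℂ}
    (h : ∀ n ∈ s, DifferentiableAt ℝ (f n) z) :
    wD (fun w => ∑ n ∈ s, f n w) z = ∑ n ∈ s, wD (f n) z := by
  simp only [wD, fderiv_fun_sum h, ContinuousLinearMap.sum_apply, Finset.mul_sum,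
    ← Finset.sum_sub_distrib]

lemma wD_const_mul {f : ℂ → ℂ} {z : ℂ} (c : ℂ) (hf : DifferentiableAt ℝ f z) :
    wD (fun w => c * f w) z = c * wD f z := by
  simp only [wD, fderiv_const_mul hf c, ContinuousLinearMap.smul_apply, smul_eq_mul]
  ring

lemma wDbar_const_mul {f : ℂ → ℂ} {z : ℂ} (c : ℂ) (hf : DifferentiableAt ℝ f z) :
    wDbar (fun w => c * f w) z = c * wDbar f z := by
  simp only [wDbar, fderiv_const_mul hf c, ContinuousLinearMap.smul_apply, smul_eq_mul]
  ring

lemma wD_m (a b : ℕ) (z : ℂ) :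
    wD (fun w : ℂ => w ^ a * ((starRingEnd ℂ) w) ^ b * Ew w) z =
      (a : ℂ) * z ^ (a - 1) * ((starRingEnd ℂ) z) ^ b * Ew z -
        z ^ a * ((starRingEnd ℂ) z) ^ (b + 1) * Ew z := by
  rw [wD_mul' (((diff_pow a).fun_mul (diff_conj_pow b)) z) (Ew_diff z),
    wD_mul' ((diff_pow a) z) ((diff_conj_pow b) z), wD_pow, wD_conj_pow, wD_Ew]
  ring

lemma wDbar_m (a b : ℕ) (z : ℂ) :
    wDbar (fun w : ℂ => w ^ a * ((starRingEnd ℂ) w) ^ b * Ew w) z =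
      (b : ℂ) * z ^ a * ((starRingEnd ℂ) z) ^ (b - 1) * Ew z -
        z ^ (a + 1) * ((starRingEnd ℂ) z) ^ b * Ew z := by
  rw [wDbar_mul' (((diff_pow a).fun_mul (diff_conj_pow b)) z) (Ew_diff z),
    wDbar_mul' ((diff_pow a) z) ((diff_conj_pow b) z), wDbar_pow, wDbar_conj_pow, wDbar_Ew]
  ring

lemma part2 (i : ℕ) (z : ℂ) : wDbar^[i] Ew z = (-1 : ℂ) ^ i * z ^ i * Ew z := by
  induction i generalizing z with
  | zero => simp
  | succ i ih =>
    rw [Function.iterate_succ_apply',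
      show wDbar^[i] Ew = fun w => (-1 : ℂ) ^ i * (w ^ i * ((starRingEnd ℂ) w) ^ 0 * Ew w) by
        funext w; rw [ih w]; ring]
    rw [wDbar_const_mul _ ((diff_m i 0) z), wDbar_m]
    push_cast
    ring

noncomputable def co (i j n : ℕ) : ℂ :=
  (-1 : ℂ) ^ (i + n) * (j.choose n : ℂ) * (Nat.descFactorial i (j - n) : ℂ)

lemma cast_desc_succ {i j n : ℕ} (hn : n ≤ j) :
    ((i + n - j : ℕ) : ℂ) * (Nat.descFactorial i (j - n) : ℂ)
      = (Nat.descFactorial i (j - n + 1) : ℂ) := by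
  rw [Nat.descFactorial_succ, show i - (j - n) = i + n - j from by omega, Nat.cast_mul]

lemma comb (i j : ℕ) (x y : ℂ) :
    ∑ n ∈ range (j + 1), co i j n *
        (((i + n - j : ℕ) : ℂ) * x ^ (i + n - j - 1) * y ^ n - x ^ (i + n - j) * y ^ (n + 1)) =
      ∑ n ∈ range (j + 2), co i (j + 1) n * (x ^ (i + n - (j + 1)) * y ^ n) := by
  set A : ℕ → ℂ := fun n => (-1 : ℂ) ^ (i + n) * (j.choose n : ℂ) *
    (Nat.descFactorial i (j - n + 1) : ℂ) * x ^ (i + n - j - 1) * y ^ n with hA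
  set B : ℕ → ℂ := fun n => co i j n * (x ^ (i + n - j) * y ^ (n + 1)) with hB
  set G1 : ℕ → ℂ := fun k => (-1 : ℂ) ^ (i + k + 1) * (j.choose k : ℂ) *
    (Nat.descFactorial i (j - k) : ℂ) * (x ^ (i + (k+1) - (j+1)) * y ^ (k + 1)) with hG1
  set G2 : ℕ → ℂ := fun k => (-1 : ℂ) ^ (i + k + 1) * (j.choose (k+1) : ℂ) *
    (Nat.descFactorial i (j - k) : ℂ) * (x ^ (i + (k+1) - (j+1)) * y ^ (k + 1)) with hG2
  set F : ℕ → ℂ := fun n => co i (j+1) n * (x ^ (i + n - (j + 1)) * y ^ n) with hF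
  have hLHS : (∑ n ∈ range (j + 1), co i j n *
      (((i + n - j : ℕ) : ℂ) * x ^ (i + n - j - 1) * y ^ n - x ^ (i + n - j) * y ^ (n + 1)))
      = (∑ n ∈ range (j + 1), A n) - ∑ n ∈ range (j + 1), B n := by
    rw [← Finset.sum_sub_distrib]
    refine Finset.sum_congr rfl fun n hn => ?_
    have h1 := cast_desc_succ (i := i) (j := j) (n := n) (by
      simpa using Nat.lt_succ_iff.mp (Finset.mem_range.mp hn))
    simp only [hA, hB, co]
    linear_combination ((-1 : ℂ) ^ (i + n) * (j.choose n : ℂ) * x ^ (i + n - j - 1) * y ^ n) * h1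
  have hF_split : ∀ k, F (k + 1) = G1 k + G2 k := by
    intro k
    simp only [hF, hG1, hG2, co, Nat.choose_succ_succ, Nat.succ_sub_succ, Nat.cast_add]
    ring
  have hRHS : (∑ n ∈ range (j + 2), F n)
      = (∑ k ∈ range (j + 1), G1 k) + ((∑ k ∈ range (j + 1), G2 k) + F 0) := by
    rw [Finset.sum_range_succ']
    simp only [hF_split]
    rw [Finset.sum_add_distrib]
    ring
  have hG1B : ∀ k ∈ range (j + 1), G1 k = -B k := by
    intro k _
    simp only [hG1, hB, co, show i + (k+1) - (j+1) = i + k - j from by omega,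
      pow_succ ((-1 : ℂ)) (i + k)]
    ring
  have hG2A : (∑ k ∈ range (j + 1), G2 k) + F 0 = ∑ n ∈ range (j + 1), A n := by
    rw [Finset.sum_range_succ' A, Finset.sum_range_succ G2]
    have h0 : F 0 = A 0 := by
      simp only [hF, hA, co, Nat.choose_zero_right, Nat.sub_zero]
      rw [show i + 0 - (j + 1) = i + 0 - j - 1 from by omega]
      norm_num
    have hj : G2 j = 0 := by
      simp only [hG2, Nat.choose_succ_self, Nat.cast_zero]
      ring
    have hk : ∀ k ∈ range j, G2 k = A (k + 1) := by
      intro k hk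
      have hkj : k < j := Finset.mem_range.mp hk
      simp only [hG2, hA, show j - (k + 1) + 1 = j - k from by omega,
        show i + (k + 1) - j - 1 = i + (k + 1) - (j + 1) from by omega]
      ring
    rw [Finset.sum_congr rfl hk, hj, h0]
    ring
  rw [hLHS, hRHS, Finset.sum_congr rfl hG1B, hG2A]
  simp [Finset.sum_neg_distrib]
  ring

lemma part1 (i j : ℕ) (z : ℂ) :
    wD^[j] (wDbar^[i] Ew) z =
      ∑ n ∈ range (j + 1), co i j n * (z ^ (i + n - j) * ((starRingEnd ℂ) z) ^ n * Ew z) := by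
  induction j generalizing z with
  | zero =>
    simp only [Function.iterate_zero, id_eq, Finset.range_one, Finset.sum_singleton, co]
    rw [part2]
    simp [mul_assoc]
  | succ j ih =>
    rw [Function.iterate_succ_apply',
      show wD^[j] (wDbar^[i] Ew) =
        fun w => ∑ n ∈ range (j+1), co i j n * (w ^ (i+n-j) * ((starRingEnd ℂ) w) ^ n * Ew w)
        from funext ih]
    rw [wD_sum (fun n _ => ((diff_m (i+n-j) n) z).const_mul (co i j n))]
    have hterm : ∀ n ∈ range (j + 1),
        wD (fun w => co i j n * (w ^ (i+n-j) * ((starRingEnd ℂ) w) ^ n * Ew w)) z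
          = co i j n * (((i + n - j : ℕ) : ℂ) * z ^ (i + n - j - 1) * ((starRingEnd ℂ) z) ^ n
              - z ^ (i + n - j) * ((starRingEnd ℂ) z) ^ (n + 1)) * Ew z := by
      intro n _
      rw [wD_const_mul _ ((diff_m (i+n-j) n) z), wD_m]
      ring
    rw [Finset.sum_congr rfl hterm, ← Finset.sum_mul, comb i j z ((starRingEnd ℂ) z),
      Finset.sum_mul]
    exact Finset.sum_congr rfl fun n _ => by ring

/-- for all i, j ≥ 0 and z ∈ ℂ,
∂^j ∂̄^i e^{−|z|²} = (Σ_{n=max(0,j−i)}^{j} (−1)^{i+n} C(j,n) (i!/(i−j+n)!) z^{i−j+n} z̄^n) e^{−|z|²};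
in particular ∂̄^i e^{−|z|²} = (−1)^i z^i e^{−|z|²}.
(Here the natural-number exponent `i + n - j` equals i − j + n, which is ≥ 0 on the
index range n ≥ max(0, j − i).) -/
theorem stmt13 :
    (∀ i j : ℕ, ∀ z : ℂ,
      wD^[j] (wDbar^[i] (fun w => (Real.exp (-‖w‖ ^ 2) : ℂ))) z =
        (∑ n ∈ Finset.Icc (j - i) j,
          (-1 : ℂ) ^ (i + n) * (j.choose n : ℂ) *
            ((i.factorial : ℂ) / ((i + n - j).factorial : ℂ)) *
            z ^ (i + n - j) * (starRingEnd ℂ z) ^ n) *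
          (Real.exp (-‖z‖ ^ 2) : ℂ)) ∧
    (∀ i : ℕ, ∀ z : ℂ,
      wDbar^[i] (fun w => (Real.exp (-‖w‖ ^ 2) : ℂ)) z =
        (-1 : ℂ) ^ i * z ^ i * (Real.exp (-‖z‖ ^ 2) : ℂ)) := by
  have hexp : (fun w : ℂ => (Real.exp (-‖w‖ ^ 2) : ℂ)) = Ew := by
    funext w
    simp only [Ew, ← Complex.ofReal_exp]
    rw [Complex.mul_conj, Complex.normSq_eq_norm_sq]
    push_cast
    ring
  constructor
  · intro i j z
    rw [hexp, part1, show (Real.exp (-‖z‖ ^ 2) : ℂ) = Ew z from congrFun hexp z]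
    have hsub : Finset.Icc (j - i) j ⊆ Finset.range (j + 1) := fun n hn => by
      simp only [Finset.mem_Icc] at hn
      exact Finset.mem_range.mpr (Nat.lt_succ_of_le hn.2)
    have hzero : ∀ n ∈ Finset.range (j + 1), n ∉ Finset.Icc (j - i) j →
        co i j n * (z ^ (i + n - j) * ((starRingEnd ℂ) z) ^ n * Ew z) = 0 := by
      intro n hn hn'
      have h1 : n < j - i := by
        simp only [Finset.mem_range] at hn
        simp only [Finset.mem_Icc] at hn'
        omega
      have h2 : Nat.descFactorial i (j - n) = 0 :=
        Nat.descFactorial_eq_zero_iff_lt.mpr (by omega)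
      simp [co, h2]
    rw [← Finset.sum_subset hsub hzero, Finset.sum_mul]
    refine Finset.sum_congr rfl fun n hn => ?_
    simp only [Finset.mem_Icc] at hn
    have hle : j - n ≤ i := by omega
    have hfac : (Nat.descFactorial i (j - n) : ℂ)
        = (i.factorial : ℂ) / ((i + n - j).factorial : ℂ) := by
      rw [eq_div_iff (Nat.cast_ne_zero.mpr (Nat.factorial_ne_zero _))]
      rw [← Nat.cast_mul, mul_comm, show i + n - j = i - (j - n) from by omega,
        Nat.factorial_mul_descFactorial hle]
    simp only [co, hfac]
    ring
  · intro i z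
    rw [hexp, show (Real.exp (-‖z‖ ^ 2) : ℂ) = Ew z from congrFun hexp z]
    exact part2 i z
end
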